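/- For any surjective group homomorphism π : F → Q from a free group F with kernel R, there is an isomorphism H_2(Q; ℤ) ≅ (R ∩ [F,F]) / [F, R] (Hopf's formula). -/

import Mathlib

/-! Group homology via the inhomogeneous bar complex (Mathlib at this version has group
cohomology but not group homology, so we define it). -/

section GroupHomology

variable (G : Type*) [Group G] (M : Type*) [AddCommGroup M] (ρ : G →* Multiplicative (AddAut M))

/-- Inhomogeneous `n`-chains: finitely supported functions `(Fin n → G) →₀ M`. -/
abbrev barChains (n : ℕ) : Type _ := (Fin n → G) →₀ M

/-- The tuple obtained from `g : Fin (n+1) → G` by multiplying the `i`-th and `(i+1)`-st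
entries together. -/
def contractAt {n : ℕ} (g : Fin (n + 1) → G) (i : Fin n) : Fin n → G := fun j =>
  if (j : ℕ) < (i : ℕ) then g (Fin.castSucc j)
  else if (j : ℕ) = (i : ℕ) then g (Fin.castSucc j) * g j.succ
  else g j.succ

/-- The value of the bar differential on a single inhomogeneous chain `[g₁|...|g_{n+1}]`. -/
noncomputable def barDsingle {n : ℕ} (g : Fin (n + 1) → G) : M →+ barChains G M n :=
  (Finsupp.singleAddHom (Fin.tail g)).comp (Multiplicative.toAdd (ρ (g 0))⁻¹ : AddAut M).toAddMonoidHom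
    + (∑ i : Fin n, ((-1 : ℤ) ^ ((i : ℕ) + 1)) • Finsupp.singleAddHom (M := M) (contractAt G g i))
    + ((-1 : ℤ) ^ (n + 1)) • Finsupp.singleAddHom (M := M) (Fin.init g)

/-- The bar differential `C_{n+1} → C_n` of the inhomogeneous chain complex computing
group homology with coefficients in the `G`-module `(M, ρ)`. -/
noncomputable def barD (n : ℕ) : barChains G M (n + 1) →+ barChains G M n :=
  Finsupp.liftAddHom fun g => barDsingle G M ρ g

/-- The `n`-cycles. -/
noncomputable def barCycles : (n : ℕ) → AddSubgroup (barChains G M n)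
  | 0 => ⊤
  | n + 1 => (barD G M ρ n).ker

/-- The `n`-boundaries. -/
noncomputable def barBoundaries (n : ℕ) : AddSubgroup (barChains G M n) :=
  (barD G M ρ n).range

/-- The `n`-th group homology `H_n(G; M)` of `G` with coefficients in the
`G`-module `(M, ρ)`. -/
noncomputable def groupHomology' (n : ℕ) : Type _ :=
  barCycles G M ρ n ⧸ ((barBoundaries G M ρ n).addSubgroupOf (barCycles G M ρ n))

noncomputable instance (n : ℕ) : AddCommGroup (groupHomology' G M ρ n) := by
  unfold groupHomology'; infer_instance

end GroupHomology

open scoped commutatorElement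

namespace HopfAux

variable {Q : Type*} [Group Q]

lemma barD_single_apply {n : ℕ} (g : Fin (n+1) → Q) (m : ℤ) :
    barD Q ℤ 1 n (Finsupp.single g m) = barDsingle Q ℤ 1 g m :=
  Finsupp.liftAddHom_apply_single _ _ _

lemma barDsingle_apply {n : ℕ} (g : Fin (n+1) → Q) (m : ℤ) :
    barDsingle Q ℤ 1 g m =
      Finsupp.single (Fin.tail g) m
        + (∑ i : Fin n, ((-1:ℤ)^((i:ℕ)+1)) • Finsupp.single (contractAt Q g i) m)
        + ((-1:ℤ)^(n+1)) • Finsupp.single (Fin.init g) m := by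
  simp [barDsingle, AddMonoidHom.add_apply, AddMonoidHom.finset_sum_apply]

lemma tail2 (a b : Q) : Fin.tail ![a,b] = ![b] := by
  funext j; fin_cases j; rfl

lemma init2 (a b : Q) : Fin.init ![a,b] = ![a] := by
  funext j; fin_cases j; rfl

lemma contract2 (a b : Q) : contractAt Q ![a,b] 0 = ![a*b] := by
  funext j; fin_cases j; rfl

lemma tail3 (a b c : Q) : Fin.tail ![a,b,c] = ![b,c] := by
  funext j; fin_cases j <;> rfl

lemma init3 (a b c : Q) : Fin.init ![a,b,c] = ![a,b] := by
  funext j; fin_cases j <;> rfl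

lemma contract3_0 (a b c : Q) : contractAt Q ![a,b,c] 0 = ![a*b,c] := by
  funext j; fin_cases j <;> rfl

lemma contract3_1 (a b c : Q) : contractAt Q ![a,b,c] 1 = ![a,b*c] := by
  funext j; fin_cases j <;> rfl

lemma D1 (a b : Q) (m : ℤ) :
    barD Q ℤ 1 1 (Finsupp.single ![a,b] m) =
      Finsupp.single ![b] m - Finsupp.single ![a*b] m + Finsupp.single ![a] m := by
  rw [barD_single_apply, barDsingle_apply]
  rw [Fin.sum_univ_one, tail2, init2, contract2]
  norm_num
  abel

lemma D2 (a b c : Q) (m : ℤ) :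
    barD Q ℤ 1 2 (Finsupp.single ![a,b,c] m) =
      Finsupp.single ![b,c] m - Finsupp.single ![a*b,c] m
        + Finsupp.single ![a,b*c] m - Finsupp.single ![a,b] m := by
  rw [barD_single_apply, barDsingle_apply]
  rw [Fin.sum_univ_two, tail3, init3, contract3_0, contract3_1]
  norm_num
  abel

end HopfAux

namespace HopfAux
variable {Q : Type*} [Group Q]

lemma eta2 (g : Fin 2 → Q) : g = ![g 0, g 1] := by funext j; fin_cases j <;> rfl
lemma eta3 (g : Fin 3 → Q) : g = ![g 0, g 1, g 2] := by funext j; fin_cases j <;> rfl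

/-- The quotient `C₂/B₂`. -/
abbrev Gam (Q : Type*) [Group Q] : Type _ := barChains Q ℤ 2 ⧸ barBoundaries Q ℤ 1 2

noncomputable def mkB : barChains Q ℤ 2 →+ Gam Q := QuotientAddGroup.mk' _

lemma mkB_boundary (x : barChains Q ℤ 3) : mkB (barD Q ℤ 1 2 x) = 0 :=
  (QuotientAddGroup.eq_zero_iff _).2 ⟨x, rfl⟩

noncomputable def βc (a b : Q) : Gam Q := mkB (Finsupp.single ![a,b] 1)

lemma cocy (a b c : Q) : βc b c - βc (a*b) c + βc a (b*c) - βc a b = 0 := by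
  have h := mkB_boundary (Q := Q) (Finsupp.single ![a,b,c] 1)
  rw [D2] at h
  simpa [βc, map_sub, map_add] using h

lemma βone_left (b : Q) : βc (1:Q) b = βc 1 1 := by
  have h := mkB_boundary (Q := Q) (Finsupp.single ![1,1,b] 1)
  rw [D2] at h
  simp only [one_mul] at h
  have : βc (1:Q) b - βc 1 b + βc 1 b - βc 1 1 = 0 := by
    simpa [βc, map_sub, map_add] using h
  have h2 : βc (1:Q) b - βc 1 1 = 0 := by rw [← this]; abel
  rw [← sub_eq_zero]; exact h2

lemma βone_right (a : Q) : βc a (1:Q) = βc 1 1 := by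
  have h := mkB_boundary (Q := Q) (Finsupp.single ![a,1,1] 1)
  rw [D2] at h
  simp only [mul_one, one_mul] at h
  have : βc (1:Q) 1 - βc a 1 + βc a 1 - βc a 1 = 0 := by
    simpa [βc, map_sub, map_add] using h
  have h2 : βc (1:Q) 1 - βc a 1 = 0 := by rw [← this]; abel
  exact (sub_eq_zero.mp h2).symm

lemma βinv (a : Q) : βc a⁻¹ a = βc a a⁻¹ := by
  have h := cocy a a⁻¹ a
  simp only [mul_inv_cancel, inv_mul_cancel, βone_left, βone_right] at h
  rw [← sub_eq_zero, ← h]; abel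

/-- The central extension of `Q` by `C₂/B₂` with cocycle `-βc`. -/
structure E (Q : Type*) [Group Q] where
  q : Q
  c : Gam Q

noncomputable instance : Group (E Q) where
  mul x y := ⟨x.q * y.q, x.c + y.c - βc x.q y.q⟩
  one := ⟨1, βc 1 1⟩
  inv x := ⟨x.q⁻¹, βc 1 1 - x.c + βc x.q⁻¹ x.q⟩
  mul_assoc x y z := by
    show E.mk _ _ = E.mk _ _
    congr 1
    · exact mul_assoc _ _ _
    · show (x.c + y.c - βc x.q y.q) + z.c - βc (x.q*y.q) z.q
        = x.c + (y.c + z.c - βc y.q z.q) - βc x.q (y.q*z.q)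
      rw [← sub_eq_zero, ← cocy x.q y.q z.q]; abel
  one_mul x := by
    show E.mk _ _ = _
    have : βc (1:Q) x.q = βc 1 1 := βone_left _
    calc E.mk (1 * x.q) (βc 1 1 + x.c - βc 1 x.q)
        = E.mk x.q x.c := by rw [this, one_mul]; congr 1; abel
      _ = x := rfl
  mul_one x := by
    show E.mk _ _ = _
    have : βc x.q (1:Q) = βc 1 1 := βone_right _
    calc E.mk (x.q * 1) (x.c + βc 1 1 - βc x.q 1)
        = E.mk x.q x.c := by rw [this, mul_one]; congr 1; abel
      _ = x := rfl
  inv_mul_cancel x := by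
    show E.mk _ _ = E.mk _ _
    congr 1
    · exact inv_mul_cancel _
    · show (βc 1 1 - x.c + βc x.q⁻¹ x.q) + x.c - βc x.q⁻¹ x.q = βc 1 1
      abel

@[simp] lemma mul_q (x y : E Q) : (x * y).q = x.q * y.q := rfl
@[simp] lemma mul_c (x y : E Q) : (x * y).c = x.c + y.c - βc x.q y.q := rfl
@[simp] lemma one_q : (1 : E Q).q = 1 := rfl
@[simp] lemma one_c : (1 : E Q).c = βc 1 1 := rfl
@[simp] lemma inv_q (x : E Q) : x⁻¹.q = x.q⁻¹ := rfl
@[simp] lemma inv_c (x : E Q) : x⁻¹.c = βc 1 1 - x.c + βc x.q⁻¹ x.q := rfl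

/-- Elements over `1 ∈ Q` are central in `E`. -/
lemma central {x : E Q} (hx : x.q = 1) (y : E Q) : y * x = x * y := by
  have ext : ∀ u v : E Q, u.q = v.q → u.c = v.c → u = v := by
    rintro ⟨a,b⟩ ⟨a',b'⟩ h1 h2; simp_all
  apply ext
  · simp [hx]
  · simp only [mul_c, hx, βone_left, βone_right]; abel

end HopfAux

namespace HopfAux
variable {Q : Type*} [Group Q]

lemma d1_d2_hom : (barD Q ℤ 1 1).comp (barD Q ℤ 1 2) = 0 := by
  apply Finsupp.addHom_ext
  intro g m
  rw [AddMonoidHom.comp_apply, AddMonoidHom.zero_apply]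
  rw [eta3 g, D2]
  simp only [map_sub, map_add, D1, mul_assoc]
  abel

lemma d1_d2 (x : barChains Q ℤ 3) : barD Q ℤ 1 1 (barD Q ℤ 1 2 x) = 0 :=
  DFunLike.congr_fun d1_d2_hom x

noncomputable def Dbar : Gam Q →+ barChains Q ℤ 1 :=
  QuotientAddGroup.lift _ (barD Q ℤ 1 1) (by
    rintro x ⟨y, rfl⟩
    exact d1_d2 y)

lemma Dbar_mkB (x : barChains Q ℤ 2) : Dbar (mkB x) = barD Q ℤ 1 1 x := rfl

lemma Dbar_βc (a b : Q) :
    Dbar (βc a b) = Finsupp.single ![b] 1 - Finsupp.single ![a*b] 1 + Finsupp.single ![a] 1 := by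
  rw [βc, Dbar_mkB, D1]

section Pi
variable {α : Type*} (π : FreeGroup α →* Q)

/-- projection `E Q →* Q`. -/
def Efst : E Q →* Q where
  toFun := E.q
  map_one' := rfl
  map_mul' _ _ := rfl

noncomputable def tau : FreeGroup α →* E Q :=
  FreeGroup.lift fun a => ⟨π (FreeGroup.of a), 0⟩

lemma tau_q (w : FreeGroup α) : (tau π w).q = π w := by
  have h : (Efst (Q := Q)).comp (tau π) = π := by
    apply FreeGroup.ext_hom
    intro a
    simp [tau, Efst]
  exact DFunLike.congr_fun h w

/-- The chain-valued cochain `t`. -/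
noncomputable def tch (w : FreeGroup α) : Gam Q := (tau π w).c

lemma tch_mul (w₁ w₂ : FreeGroup α) :
    tch π (w₁ * w₂) = tch π w₁ + tch π w₂ - βc (π w₁) (π w₂) := by
  unfold tch
  rw [map_mul, mul_c, tau_q, tau_q]

lemma tch_one : tch π (1 : FreeGroup α) = βc 1 1 := by
  unfold tch; rw [map_one, one_c]

lemma tch_inv (w : FreeGroup α) :
    tch π w⁻¹ = βc 1 1 - tch π w + βc (π w)⁻¹ (π w) := by
  unfold tch
  rw [map_inv, inv_c, tau_q]

lemma tch_inv_ker {w : FreeGroup α} (hw : π w = 1) :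
    tch π w⁻¹ = 2 • βc 1 1 - tch π w := by
  rw [tch_inv, hw, inv_one, βone_left]; abel

lemma tch_conj {f r : FreeGroup α} (hr : π r = 1) :
    tch π (f * r * f⁻¹) = tch π r := by
  have hc : tau π f * tau π r * (tau π f)⁻¹ = tau π r := by
    rw [central (x := tau π r) (by rw [tau_q, hr]) (tau π f)]
    group
  unfold tch
  rw [map_mul, map_mul, map_inv, hc]

/-- The subgroup of elements `w ∈ ker π` with `t w = βc 1 1`; contains `⁅⊤, ker π⁆`. -/
noncomputable def T0 : Subgroup (FreeGroup α) where
  carrier := {w | π w = 1 ∧ tch π w = βc 1 1}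
  one_mem' := ⟨map_one π, tch_one π⟩
  mul_mem' := by
    rintro x y ⟨hx1, hx2⟩ ⟨hy1, hy2⟩
    refine ⟨by simp [map_mul, hx1, hy1], ?_⟩
    rw [tch_mul, hx1, hy1, hx2, hy2, βone_left]; abel
  inv_mem' := by
    rintro x ⟨hx1, hx2⟩
    refine ⟨by simp [map_inv, hx1], ?_⟩
    rw [tch_inv_ker π hx1, hx2]; abel

lemma commutator_le_T0 : ⁅(⊤ : Subgroup (FreeGroup α)), π.ker⁆ ≤ T0 π := by
  rw [Subgroup.commutator_le]
  intro f _ r hr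
  rw [MonoidHom.mem_ker] at hr
  constructor
  · show π _ = 1
    rw [commutatorElement_def]
    simp [map_mul, map_inv, hr]
  · show tch π _ = βc 1 1
    rw [commutatorElement_def]
    have h1 : tch π (f * r * f⁻¹ * r⁻¹)
        = tch π (f * r * f⁻¹) + tch π r⁻¹ - βc (π (f * r * f⁻¹)) (π r⁻¹) := tch_mul π _ _
    rw [h1, tch_conj π hr, tch_inv_ker π hr]
    have : π (f * r * f⁻¹) = 1 := by simp [map_mul, map_inv, hr]
    have hri : π r⁻¹ = 1 := by simp [hr]
    rw [this, hri, βone_left]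
    abel

end Pi
end HopfAux

namespace HopfAux
variable {Q : Type*} [Group Q]

section Pi
variable {α : Type*} (π : FreeGroup α →* Q)

/-- The homomorphism `w ↦ ∂(t w) - [π w]`. -/
noncomputable def vmap : FreeGroup α →* Multiplicative (barChains Q ℤ 1) where
  toFun w := Multiplicative.ofAdd (Dbar (tch π w) - Finsupp.single ![π w] 1)
  map_one' := by
    show Multiplicative.ofAdd (Dbar (tch π 1) - Finsupp.single ![π 1] 1) = 1
    have h : Dbar (tch π (1 : FreeGroup α)) - Finsupp.single ![π (1:FreeGroup α)] 1 = 0 := by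
      rw [tch_one, map_one, βc, Dbar_mkB, D1, one_mul]
      abel
    rw [h]; rfl
  map_mul' w₁ w₂ := by
    show Multiplicative.ofAdd _ = Multiplicative.ofAdd _ * Multiplicative.ofAdd _
    have h : Dbar (tch π (w₁ * w₂)) - Finsupp.single ![π (w₁*w₂)] 1
        = (Dbar (tch π w₁) - Finsupp.single ![π w₁] 1)
          + (Dbar (tch π w₂) - Finsupp.single ![π w₂] 1) := by
      rw [tch_mul, map_sub, map_add, Dbar_βc, map_mul]
      abel
    rw [h]; rfl

lemma vmap_commutator {k : FreeGroup α} (hk : k ∈ commutator (FreeGroup α)) :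
    Dbar (tch π k) = Finsupp.single ![π k] 1 := by
  have h : commutator (FreeGroup α) ≤ (vmap π).ker := by
    rw [commutator, Subgroup.commutator_le]
    intro f _ g _
    rw [MonoidHom.mem_ker, map_commutatorElement]
    exact commutatorElement_eq_one_iff_commute.mpr (mul_comm _ _)
  have h1 := h hk
  rw [MonoidHom.mem_ker] at h1
  have h2 : Dbar (tch π k) - Finsupp.single ![π k] 1 = 0 := by
    have h3 := congrArg Multiplicative.toAdd h1
    simpa [vmap] using h3
  rw [← sub_eq_zero]; exact h2

lemma Dbar_σ {k : FreeGroup α} (h1 : π k = 1) (hk : k ∈ commutator (FreeGroup α)) :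
    Dbar (tch π k - βc 1 1) = 0 := by
  rw [map_sub, vmap_commutator π hk, h1, βc, Dbar_mkB, D1, one_mul]
  abel

/-- `R ∩ [F,F]`. -/
abbrev Ksub : Subgroup (FreeGroup α) := π.ker ⊓ commutator (FreeGroup α)

/-- `σ : K →* ker D̄`, `k ↦ t k - β(1,1)`. -/
noncomputable def σK : ↥(Ksub π) →* Multiplicative ↥((Dbar (Q := Q)).ker) where
  toFun k := Multiplicative.ofAdd
    ⟨tch π k.1 - βc 1 1, by
      rw [AddMonoidHom.mem_ker]
      exact Dbar_σ π (MonoidHom.mem_ker.mp k.2.1) k.2.2⟩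
  map_one' := by
    have h : tch π ((1 : ↥(Ksub π)) : FreeGroup α) - βc 1 1 = 0 := by
      show tch π (1 : FreeGroup α) - βc 1 1 = 0
      rw [tch_one]; abel
    exact congrArg Multiplicative.ofAdd (Subtype.ext h)
  map_mul' k₁ k₂ := by
    have h : tch π ((k₁ * k₂ : ↥(Ksub π)) : FreeGroup α) - βc 1 1
        = (tch π k₁.1 - βc 1 1) + (tch π k₂.1 - βc 1 1) := by
      show tch π (k₁.1 * k₂.1) - βc 1 1 = _
      rw [tch_mul, MonoidHom.mem_ker.mp k₁.2.1, MonoidHom.mem_ker.mp k₂.2.1, βone_left]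
      abel
    exact congrArg Multiplicative.ofAdd (Subtype.ext h)

lemma σK_commutator {k : ↥(Ksub π)}
    (hk : k ∈ (⁅(⊤ : Subgroup (FreeGroup α)), π.ker⁆).subgroupOf (Ksub π)) :
    σK π k = 1 := by
  rw [Subgroup.mem_subgroupOf] at hk
  obtain ⟨h1, h2⟩ := commutator_le_T0 π hk
  have h : tch π k.1 - βc 1 1 = 0 := by rw [h2]; abel
  exact congrArg Multiplicative.ofAdd (Subtype.ext h)

/-- descended to the Hopf quotient. -/
noncomputable def Ψq :
    (↥(Ksub π) ⧸ (⁅(⊤ : Subgroup (FreeGroup α)), π.ker⁆).subgroupOf (Ksub π)) →*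
      Multiplicative ↥((Dbar (Q := Q)).ker) :=
  QuotientGroup.lift _ (σK π) (fun _ hk => σK_commutator π hk)

end Pi
end HopfAux

namespace HopfAux
variable {Q : Type*} [Group Q]

lemma barCycles_two : barCycles Q ℤ 1 2 = (barD Q ℤ 1 1).ker := rfl

/-- `Z₂ →+ ker D̄`. -/
noncomputable def ZtoKer : ↥(barCycles Q ℤ 1 2) →+ ↥((Dbar (Q := Q)).ker) where
  toFun x := ⟨mkB x.1, by
    rw [AddMonoidHom.mem_ker, Dbar_mkB]
    have hx : x.1 ∈ (barD Q ℤ 1 1).ker := by rw [← barCycles_two]; exact x.2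
    exact hx⟩
  map_zero' := by ext; show mkB 0 = 0; exact map_zero _
  map_add' x y := by ext; show mkB (x.1 + y.1) = mkB x.1 + mkB y.1; exact map_add _ _ _

lemma ZtoKer_surjective : Function.Surjective (ZtoKer (Q := Q)) := by
  rintro ⟨c, hc⟩
  obtain ⟨z, rfl⟩ := QuotientAddGroup.mk'_surjective (barBoundaries Q ℤ 1 2) c
  rw [AddMonoidHom.mem_ker] at hc
  have hz : z ∈ barCycles Q ℤ 1 2 := by
    rw [barCycles_two, AddMonoidHom.mem_ker]
    exact hc
  exact ⟨⟨z, hz⟩, rfl⟩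

lemma ZtoKer_ker :
    (ZtoKer (Q := Q)).ker
      = (barBoundaries Q ℤ 1 2).addSubgroupOf (barCycles Q ℤ 1 2) := by
  ext x
  rw [AddMonoidHom.mem_ker, AddSubgroup.mem_addSubgroupOf]
  constructor
  · intro h
    have : mkB x.1 = 0 := congrArg Subtype.val h
    exact (QuotientAddGroup.eq_zero_iff _).mp this
  · intro h
    exact Subtype.ext ((QuotientAddGroup.eq_zero_iff _).mpr h)

/-- `H₂ ≃+ ker D̄`. -/
noncomputable def eH : groupHomology' Q ℤ 1 2 ≃+ ↥((Dbar (Q := Q)).ker) :=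
  (QuotientAddGroup.quotientAddEquivOfEq ZtoKer_ker.symm).trans
    (QuotientAddGroup.quotientKerEquivOfSurjective _ ZtoKer_surjective)

end HopfAux

namespace HopfAux
variable {Q : Type*} [Group Q]

section Sec
variable {α : Type*} {π : FreeGroup α →* Q} (hπ : Function.Surjective π)

/-- a set-theoretic section of `π`. -/
noncomputable def sget (q : Q) : FreeGroup α := (hπ q).choose

lemma sget_spec (q : Q) : π (sget hπ q) = q := (hπ q).choose_spec

/-- `r(g,h) = s(g) s(h) s(gh)⁻¹ ∈ R`. -/
noncomputable def rmap (a b : Q) : FreeGroup α :=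
  sget hπ a * sget hπ b * (sget hπ (a * b))⁻¹

lemma rmap_mem (a b : Q) : rmap hπ a b ∈ π.ker := by
  rw [MonoidHom.mem_ker]
  simp only [rmap, map_mul, map_inv, sget_spec]
  group

/-- `R/[F,R]`. -/
abbrev RQ : Type _ :=
  ↥π.ker ⧸ ((⁅(⊤ : Subgroup (FreeGroup α)), π.ker⁆).subgroupOf π.ker)

noncomputable def mkRQ : ↥(π.ker) →* RQ (π := π) :=
  QuotientGroup.mk' _

lemma mkRQ_eq {x y : ↥π.ker} (h : (x.1)⁻¹ * y.1 ∈ ⁅(⊤ : Subgroup (FreeGroup α)), π.ker⁆) :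
    mkRQ (π := π) x = mkRQ y := by
  show (QuotientGroup.mk x : RQ (π := π)) = QuotientGroup.mk y
  rw [QuotientGroup.eq, Subgroup.mem_subgroupOf]
  exact h

noncomputable instance : CommGroup (RQ (π := π)) :=
  { (inferInstance : Group (RQ (π := π))) with
    mul_comm := by
      intro a b
      obtain ⟨x, rfl⟩ := QuotientGroup.mk'_surjective _ a
      obtain ⟨y, rfl⟩ := QuotientGroup.mk'_surjective _ b
      show mkRQ (π := π) (x * y) = mkRQ (y * x)
      apply mkRQ_eq
      have : ((x * y).1)⁻¹ * (y * x).1 = ⁅(y.1)⁻¹, (x.1)⁻¹⁆ := by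
        show (x.1 * y.1)⁻¹ * (y.1 * x.1) = _
        rw [commutatorElement_def]
        group
      rw [this]
      rw [Subgroup.commutator_comm]
      exact Subgroup.commutator_mem_commutator (inv_mem y.2) (Subgroup.mem_top _) }

/-- class of `r(g,h)` in `R/[F,R]`. -/
noncomputable def rr (a b : Q) : RQ (π := π) := mkRQ ⟨rmap hπ a b, rmap_mem hπ a b⟩

lemma rr_cocycle (a b c : Q) :
    rr hπ b c * rr hπ a (b*c) = rr hπ a b * rr hπ (a*b) c := by
  show mkRQ (π := π) (⟨_,_⟩ * ⟨_,_⟩) = mkRQ (⟨_,_⟩ * ⟨_,_⟩)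
  apply mkRQ_eq
  show (rmap hπ b c * rmap hπ a (b*c))⁻¹ * (rmap hπ a b * rmap hπ (a*b) c)
    ∈ ⁅(⊤ : Subgroup (FreeGroup α)), π.ker⁆
  have hassoc : sget hπ (a * b * c) = sget hπ (a * (b * c)) := by rw [mul_assoc]
  have key : (rmap hπ b c * rmap hπ a (b*c))⁻¹ * (rmap hπ a b * rmap hπ (a*b) c)
      = (rmap hπ a (b*c))⁻¹ * ⁅(rmap hπ b c)⁻¹, sget hπ a⁆ * (rmap hπ a (b*c)) := by
    rw [commutatorElement_def]
    unfold rmap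
    rw [hassoc]
    group
  rw [key]
  have hmem : ⁅(rmap hπ b c)⁻¹, sget hπ a⁆ ∈ ⁅(⊤ : Subgroup (FreeGroup α)), π.ker⁆ := by
    rw [Subgroup.commutator_comm]
    exact Subgroup.commutator_mem_commutator (inv_mem (rmap_mem hπ b c)) (Subgroup.mem_top _)
  have := Subgroup.Normal.conj_mem inferInstance _ hmem (rmap hπ a (b*c))⁻¹
  simpa [mul_assoc] using this

/-- `Φ₀ : C₂ →+ R/[F,R]` (additively). -/
noncomputable def Φ₀ : barChains Q ℤ 2 →+ Additive (RQ (π := π)) :=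
  Finsupp.liftAddHom fun g => zmultiplesHom _ (Additive.ofMul (rr hπ (g 0) (g 1)))

lemma Φ₀_single (a b : Q) :
    Φ₀ hπ (Finsupp.single ![a,b] 1) = Additive.ofMul (rr hπ a b) := by
  rw [Φ₀, Finsupp.liftAddHom_apply_single, zmultiplesHom_apply, one_zsmul]
  simp

lemma Φ₀_boundary (x : barChains Q ℤ 3) : Φ₀ hπ (barD Q ℤ 1 2 x) = 0 := by
  have h : (Φ₀ hπ).comp (barD Q ℤ 1 2) = 0 := by
    apply Finsupp.addHom_ext'
    intro g
    apply AddMonoidHom.ext_int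
    rw [AddMonoidHom.comp_apply, AddMonoidHom.comp_apply, Finsupp.singleAddHom_apply]
    rw [eta3 g, D2]
    simp only [map_sub, map_add, Φ₀_single, AddMonoidHom.zero_apply]
    have hcoc := rr_cocycle hπ (g 0) (g 1) (g 2)
    have : Additive.ofMul (rr hπ (g 1) (g 2)) + Additive.ofMul (rr hπ (g 0) (g 1 * g 2))
        = Additive.ofMul (rr hπ (g 0) (g 1)) + Additive.ofMul (rr hπ (g 0 * g 1) (g 2)) :=
      congrArg Additive.ofMul hcoc
    rw [← sub_eq_zero] at this ⊢
    rw [← this]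
    abel
  exact DFunLike.congr_fun h x

/-- `Φ̄ : C₂/B₂ →+ R/[F,R]`. -/
noncomputable def Φbar : Gam Q →+ Additive (RQ (π := π)) :=
  QuotientAddGroup.lift _ (Φ₀ hπ) (by rintro x ⟨y, rfl⟩; exact Φ₀_boundary hπ y)

lemma Φbar_mkB (x : barChains Q ℤ 2) : Φbar hπ (mkB x) = Φ₀ hπ x := rfl

lemma Φbar_βc (a b : Q) : Φbar hπ (βc a b) = Additive.ofMul (rr hπ a b) := by
  rw [βc, Φbar_mkB, Φ₀_single]

end Sec
end HopfAux

namespace HopfAux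

section CentralHelpers
variable {G : Type*} [Group G]

lemma comm_central_left {z a b : G} (hz : ∀ y, z*y = y*z) : ⁅z*a, b⁆ = ⁅a,b⁆ := by
  simp only [commutatorElement_def, mul_inv_rev]
  calc z*a*b*(a⁻¹*z⁻¹)*b⁻¹ = z*(a*b*a⁻¹)*z⁻¹*b⁻¹ := by group
    _ = (a*b*a⁻¹)*z*z⁻¹*b⁻¹ := by rw [hz (a*b*a⁻¹)]
    _ = a*b*a⁻¹*b⁻¹ := by group

lemma comm_central_right {z a b : G} (hz : ∀ y, z*y = y*z) : ⁅a, z*b⁆ = ⁅a,b⁆ := by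
  simp only [commutatorElement_def, mul_inv_rev]
  calc a*(z*b)*a⁻¹*(b⁻¹*z⁻¹) = (a*z)*(b*a⁻¹*b⁻¹)*z⁻¹ := by group
    _ = (z*a)*(b*a⁻¹*b⁻¹)*z⁻¹ := by rw [← hz a]
    _ = z*(a*b*a⁻¹*b⁻¹)*z⁻¹ := by group
    _ = (a*b*a⁻¹*b⁻¹)*z*z⁻¹ := by rw [hz (a*b*a⁻¹*b⁻¹)]
    _ = a*b*a⁻¹*b⁻¹ := by group

end CentralHelpers

variable {Q : Type*} [Group Q]

section Sec
variable {α : Type*} {π : FreeGroup α →* Q} (hπ : Function.Surjective π)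

/-- `F/[F,R]`. -/
abbrev FQt : Type _ := FreeGroup α ⧸ (⁅(⊤ : Subgroup (FreeGroup α)), π.ker⁆)

noncomputable def pF : FreeGroup α →* FQt (π := π) := QuotientGroup.mk' _

lemma pF_eq {x y : FreeGroup α} (h : x⁻¹ * y ∈ ⁅(⊤ : Subgroup (FreeGroup α)), π.ker⁆) :
    pF (π := π) x = pF y := by
  show (QuotientGroup.mk x : FQt (π := π)) = QuotientGroup.mk y
  rw [QuotientGroup.eq]
  exact h

lemma pF_comm {r : FreeGroup α} (hr : r ∈ π.ker) (w : FreeGroup α) :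
    pF (π := π) r * pF w = pF w * pF r := by
  rw [← map_mul, ← map_mul]
  apply pF_eq
  have h : (r * w)⁻¹ * (w * r) = ⁅w⁻¹, r⁻¹⁆ := by
    rw [commutatorElement_def]; group
  rw [h]
  exact Subgroup.commutator_mem_commutator (Subgroup.mem_top _) (inv_mem hr)

noncomputable def ιR : RQ (π := π) →* FQt (π := π) :=
  QuotientGroup.map _ _ π.ker.subtype le_rfl

lemma ιR_mkRQ (x : ↥π.ker) : ιR (mkRQ (π := π) x) = pF x.1 := rfl

lemma ιR_rr (a b : Q) : ιR (rr hπ a b) = pF (π := π) (rmap hπ a b) := rfl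

lemma ι_central (x : RQ (π := π)) (y : FQt (π := π)) : ιR x * y = y * ιR x := by
  obtain ⟨r, rfl⟩ := QuotientGroup.mk'_surjective _ x
  obtain ⟨w, rfl⟩ := QuotientGroup.mk'_surjective _ y
  exact pF_comm r.2 w

lemma ι_central_inv (x : RQ (π := π)) (y : FQt (π := π)) : (ιR x)⁻¹ * y = y * (ιR x)⁻¹ := by
  rw [← map_inv]
  exact ι_central _ _

noncomputable def πbar : FQt (π := π) →* Q :=
  QuotientGroup.lift _ π (by
    intro x hx
    have hle : ⁅(⊤ : Subgroup (FreeGroup α)), π.ker⁆ ≤ π.ker := by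
      rw [Subgroup.commutator_le]
      intro f _ r hr
      rw [MonoidHom.mem_ker, map_commutatorElement, MonoidHom.mem_ker.mp hr]
      simp
    exact MonoidHom.mem_ker.mp (hle hx))

lemma πbar_pF (w : FreeGroup α) : πbar (pF (π := π) w) = π w := rfl

lemma central_of_ker {x : FQt (π := π)} (hx : πbar x = 1) (y : FQt (π := π)) :
    x * y = y * x := by
  obtain ⟨w, rfl⟩ := QuotientGroup.mk'_surjective _ x
  obtain ⟨v, rfl⟩ := QuotientGroup.mk'_surjective _ y
  exact pF_comm hx v

/-- `Φ̄(t w)` as an element of `R/[F,R]`. -/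
noncomputable def φt (w : FreeGroup α) : RQ (π := π) :=
  Additive.toMul (Φbar hπ (tch π w))

lemma φt_mul (w₁ w₂ : FreeGroup α) :
    φt hπ (w₁ * w₂) = φt hπ w₁ * φt hπ w₂ * (rr hπ (π w₁) (π w₂))⁻¹ := by
  unfold φt
  rw [tch_mul, map_sub, map_add, Φbar_βc]
  rfl

lemma φt_one : φt hπ (1 : FreeGroup α) = rr hπ 1 1 := by
  unfold φt
  rw [tch_one]
  show Additive.toMul (Φbar hπ (βc 1 1)) = _
  rw [Φbar_βc]
  rfl

lemma φt_of (a : α) : φt hπ (FreeGroup.of a) = 1 := by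
  unfold φt
  have h : tch π (FreeGroup.of a) = 0 := by
    unfold tch tau
    rw [FreeGroup.lift_apply_of]
  rw [h, map_zero]
  rfl

/-- The free hom sending a generator `a` to the class of `s(π a)`. -/
noncomputable def Θfree : FreeGroup α →* FQt (π := π) :=
  FreeGroup.lift fun a => pF (sget hπ (π (FreeGroup.of a)))

lemma key1 (g h : Q) :
    pF (π := π) (sget hπ (g * h)) = (ιR (rr hπ g h))⁻¹ * (pF (sget hπ g) * pF (sget hπ h)) := by
  rw [ιR_rr, ← map_inv, ← map_mul, ← map_mul]
  apply congrArg
  show sget hπ (g*h) = (rmap hπ g h)⁻¹ * (sget hπ g * sget hπ h)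
  rw [rmap]
  group

lemma pF_sget_one : pF (π := π) (sget hπ 1) = ιR (rr hπ 1 1) := by
  rw [ιR_rr]
  apply congrArg
  show sget hπ 1 = rmap hπ 1 1
  rw [rmap]
  have h11 : sget hπ ((1:Q) * 1) = sget hπ 1 := by rw [mul_one]
  rw [h11]
  group

/-- `P w`: `pF (s (π w)) = ι(Φ̄(t w)) * Θ w`. -/
def Pspec (w : FreeGroup α) : Prop :=
  pF (π := π) (sget hπ (π w)) = ιR (φt hπ w) * Θfree hπ w

lemma Pspec_one : Pspec hπ (1 : FreeGroup α) := by
  unfold Pspec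
  rw [map_one, map_one, φt_one, mul_one]
  exact pF_sget_one hπ

lemma Pspec_of (a : α) : Pspec hπ (FreeGroup.of a) := by
  unfold Pspec
  rw [φt_of, map_one, one_mul]
  unfold Θfree
  rw [FreeGroup.lift_apply_of]

lemma comm3 {H : Type*} [CommGroup H] (x y z : H) : x⁻¹ * y * z * x = z * y := by
  rw [mul_assoc, mul_assoc, mul_comm z x, mul_comm y (x * z), ← mul_assoc, ← mul_assoc,
    inv_mul_cancel, one_mul]

lemma Pspec_mul {w₁ w₂ : FreeGroup α} (h₁ : Pspec hπ w₁) (h₂ : Pspec hπ w₂) :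
    Pspec hπ (w₁ * w₂) := by
  unfold Pspec at *
  have hg : π (w₁ * w₂) = π w₁ * π w₂ := map_mul _ _ _
  rw [hg, key1 hπ (π w₁) (π w₂), h₁, h₂, φt_mul, map_mul, map_mul, map_inv, map_mul]
  have cI := ι_central (π := π) (φt hπ w₁)
  have cJ := ι_central (π := π) (φt hπ w₂)
  have cK := ι_central_inv (π := π) (rr hπ (π w₁) (π w₂))
  simp only [mul_assoc]
  simp only [cI]
  simp only [cJ]
  simp only [cK]
  simp only [mul_assoc]
  congr 1
  congr 1
  rw [← map_inv, ← map_mul, ← map_mul, ← map_mul, ← map_mul]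
  apply congrArg
  simp only [mul_comm, mul_left_comm, mul_assoc]

lemma Pspec_inv {w : FreeGroup α} (h : Pspec hπ w) : Pspec hπ w⁻¹ := by
  unfold Pspec at *
  have hφ : φt hπ w⁻¹ = (φt hπ w)⁻¹ * rr hπ 1 1 * rr hπ (π w) (π w)⁻¹ := by
    have h1 : φt hπ (w * w⁻¹) = φt hπ w * φt hπ w⁻¹ * (rr hπ (π w) (π w⁻¹))⁻¹ := φt_mul hπ w w⁻¹
    rw [mul_inv_cancel, φt_one, map_inv] at h1
    have h2 : φt hπ w * φt hπ w⁻¹ = rr hπ 1 1 * rr hπ (π w) (π w)⁻¹ := by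
      rw [h1]; group
    calc φt hπ w⁻¹ = (φt hπ w)⁻¹ * (φt hπ w * φt hπ w⁻¹) := by group
      _ = (φt hπ w)⁻¹ * (rr hπ 1 1 * rr hπ (π w) (π w)⁻¹) := by rw [h2]
      _ = (φt hπ w)⁻¹ * rr hπ 1 1 * rr hπ (π w) (π w)⁻¹ := by rw [mul_assoc]
  have hmu : sget hπ (π w * (π w)⁻¹) = sget hπ 1 := by rw [mul_inv_cancel]
  have hk := key1 hπ (π w) (π w)⁻¹
  rw [hmu] at hk
  have e : ιR (rr hπ (π w) (π w)⁻¹) * pF (π := π) (sget hπ 1)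
      = pF (sget hπ (π w)) * pF (sget hπ ((π w)⁻¹)) := by
    rw [hk]; group
  have hsg : pF (π := π) (sget hπ ((π w)⁻¹))
      = (pF (sget hπ (π w)))⁻¹ * (ιR (rr hπ (π w) (π w)⁻¹) * pF (sget hπ 1)) := by
    rw [e]; group
  have hθ : (Θfree hπ w)⁻¹ = (pF (π := π) (sget hπ (π w)))⁻¹ * ιR (φt hπ w) := by
    rw [h]; group
  rw [map_inv (f := π), hsg, map_inv (f := Θfree hπ), hφ, pF_sget_one hπ, hθ]
  have hc := ι_central (π := π) ((φt hπ w)⁻¹ * rr hπ 1 1 * rr hπ (π w) (π w)⁻¹)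
    (pF (sget hπ (π w)))⁻¹
  symm
  calc ιR ((φt hπ w)⁻¹ * rr hπ 1 1 * rr hπ (π w) (π w)⁻¹) * ((pF (sget hπ (π w)))⁻¹ * ιR (φt hπ w))
      = (pF (sget hπ (π w)))⁻¹ * (ιR ((φt hπ w)⁻¹ * rr hπ 1 1 * rr hπ (π w) (π w)⁻¹)
          * ιR (φt hπ w)) := by
        rw [← mul_assoc, hc, mul_assoc]
    _ = (pF (sget hπ (π w)))⁻¹ * ιR ((φt hπ w)⁻¹ * rr hπ 1 1 * rr hπ (π w) (π w)⁻¹ * φt hπ w) := by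
        rw [← map_mul]
    _ = (pF (sget hπ (π w)))⁻¹ * ιR (rr hπ (π w) (π w)⁻¹ * rr hπ 1 1) := by
        rw [comm3]
    _ = (pF (sget hπ (π w)))⁻¹ * (ιR (rr hπ (π w) (π w)⁻¹) * ιR (rr hπ 1 1)) := by
        rw [map_mul]

lemma Pspec_all (w : FreeGroup α) : Pspec hπ w := by
  induction w using FreeGroup.induction_on with
  | C1 => exact Pspec_one hπ
  | of a => exact Pspec_of hπ a
  | inv_of a ih => exact Pspec_inv hπ ih
  | mul w₁ w₂ ih₁ ih₂ => exact Pspec_mul hπ ih₁ ih₂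

end Sec
end HopfAux

namespace HopfAux
variable {Q : Type*} [Group Q]

section Sec
variable {α : Type*} {π : FreeGroup α →* Q} (hπ : Function.Surjective π)

lemma πbar_Θfree (w : FreeGroup α) : πbar (Θfree hπ w) = π w := by
  have h : (πbar (π := π)).comp (Θfree hπ) = π := by
    apply FreeGroup.ext_hom
    intro a
    show πbar (Θfree hπ (FreeGroup.of a)) = π (FreeGroup.of a)
    unfold Θfree
    rw [FreeGroup.lift_apply_of, πbar_pF, sget_spec]
  exact DFunLike.congr_fun h w

lemma zc_central (w : FreeGroup α) (y : FQt (π := π)) :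
    (Θfree hπ w * (pF w)⁻¹) * y = y * (Θfree hπ w * (pF w)⁻¹) := by
  apply central_of_ker
  rw [map_mul, map_inv, πbar_Θfree, πbar_pF, mul_inv_cancel]

lemma Θfree_eq_pF_of_commutator {k : FreeGroup α} (hk : k ∈ commutator (FreeGroup α)) :
    Θfree hπ k = pF (π := π) k := by
  have hle : commutator (FreeGroup α) ≤ (Θfree hπ).eqLocus (pF (π := π)) := by
    rw [commutator, Subgroup.commutator_le]
    intro f _ g _
    show Θfree hπ ⁅f, g⁆ = pF ⁅f, g⁆
    rw [map_commutatorElement, map_commutatorElement]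
    have hf : Θfree hπ f = (Θfree hπ f * (pF (π := π) f)⁻¹) * pF f := by group
    have hg : Θfree hπ g = (Θfree hπ g * (pF (π := π) g)⁻¹) * pF g := by group
    rw [hf, hg, comm_central_left (zc_central hπ f), comm_central_right (zc_central hπ g)]
  exact hle hk

include hπ in
lemma inj_core {k : FreeGroup α} (hker : k ∈ π.ker) (hcomm : k ∈ commutator (FreeGroup α))
    (ht : tch π k = βc 1 1) : k ∈ ⁅(⊤ : Subgroup (FreeGroup α)), π.ker⁆ := by
  have hP := Pspec_all hπ k
  unfold Pspec at hP
  have hφ : φt hπ k = rr hπ 1 1 := by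
    unfold φt
    rw [ht]
    show Additive.toMul (Φbar hπ (βc 1 1)) = _
    rw [Φbar_βc]
    rfl
  have hπk : π k = 1 := hker
  rw [hπk, hφ, Θfree_eq_pF_of_commutator hπ hcomm, pF_sget_one hπ] at hP
  have h1 : pF (π := π) k = 1 := by
    have := mul_left_cancel (a := ιR (rr hπ 1 1)) (b := pF (π := π) k) (c := (1 : FQt (π := π)))
      (by rw [mul_one]; exact hP.symm)
    exact this
  exact (QuotientGroup.eq_one_iff k).mp h1

end Sec
end HopfAux

namespace HopfAux
variable {Q : Type*} [Group Q]

section Sec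
variable {α : Type*} {π : FreeGroup α →* Q} (hπ : Function.Surjective π)

/-- `σ` on all of `R`, valued in `C₂/B₂`. -/
noncomputable def σR : ↥π.ker →* Multiplicative (Gam Q) where
  toFun r := Multiplicative.ofAdd (tch π r.1 - βc 1 1)
  map_one' := by
    have h : tch π ((1 : ↥π.ker) : FreeGroup α) - βc 1 1 = 0 := by
      show tch π (1 : FreeGroup α) - βc 1 1 = 0
      rw [tch_one]; abel
    exact congrArg Multiplicative.ofAdd h
  map_mul' r₁ r₂ := by
    have h : tch π ((r₁ * r₂ : ↥π.ker) : FreeGroup α) - βc 1 1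
        = (tch π r₁.1 - βc 1 1) + (tch π r₂.1 - βc 1 1) := by
      show tch π (r₁.1 * r₂.1) - βc 1 1 = _
      rw [tch_mul, MonoidHom.mem_ker.mp r₁.2, MonoidHom.mem_ker.mp r₂.2, βone_left]
      abel
    exact congrArg Multiplicative.ofAdd h

noncomputable def σbar : RQ (π := π) →* Multiplicative (Gam Q) :=
  QuotientGroup.lift _ (σR (π := π)) (by
    intro r hr
    rw [Subgroup.mem_subgroupOf] at hr
    obtain ⟨h1, h2⟩ := commutator_le_T0 π hr
    have h : tch π r.1 - βc 1 1 = 0 := by rw [h2]; abel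
    exact congrArg Multiplicative.ofAdd h)

lemma σbar_mkRQ (r : ↥π.ker) :
    σbar (mkRQ (π := π) r) = Multiplicative.ofAdd (tch π r.1 - βc 1 1) := rfl

/-- `σ̄ ∘ Φ₀` as an additive hom. -/
noncomputable def SΦ : barChains Q ℤ 2 →+ Gam Q :=
  AddMonoidHom.mk' (fun z => Multiplicative.toAdd (σbar (π := π) (Additive.toMul (Φ₀ hπ z))))
    (by
      intro a b
      show Multiplicative.toAdd (σbar (π := π) (Additive.toMul (Φ₀ hπ (a + b)))) = _
      rw [map_add]
      show Multiplicative.toAdd (σbar (Additive.toMul (Φ₀ hπ a) * Additive.toMul (Φ₀ hπ b))) = _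
      rw [map_mul]
      rfl)

/-- `L : C₁ →+ C₂/B₂`, `[q] ↦ t(s q)`. -/
noncomputable def LL : barChains Q ℤ 1 →+ Gam Q :=
  Finsupp.liftAddHom fun g => zmultiplesHom _ (tch π (sget hπ (g 0)))

lemma LL_single (q : Q) : LL hπ (Finsupp.single ![q] 1) = tch π (sget hπ q) := by
  rw [LL, Finsupp.liftAddHom_apply_single, zmultiplesHom_apply, one_zsmul]
  norm_num

lemma tch_rmap (a b : Q) :
    tch π (rmap hπ a b)
      = tch π (sget hπ a) + tch π (sget hπ b) - tch π (sget hπ (a*b)) - βc a b + βc 1 1 := by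
  unfold rmap
  rw [tch_mul, tch_mul, tch_inv]
  simp only [map_mul, map_inv, sget_spec]
  rw [βinv]
  abel

include hπ in
lemma SΦ_eq : SΦ hπ = (LL hπ).comp (barD Q ℤ 1 1) - mkB := by
  apply Finsupp.addHom_ext'
  intro g
  apply AddMonoidHom.ext_int
  simp only [AddMonoidHom.comp_apply, AddMonoidHom.sub_apply, Finsupp.singleAddHom_apply]
  rw [eta2 g]
  have hΦ : Additive.toMul (Φ₀ hπ (Finsupp.single ![g 0, g 1] 1)) = rr hπ (g 0) (g 1) := by
    rw [Φ₀_single]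
    rfl
  show Multiplicative.toAdd (σbar (π := π) (Additive.toMul (Φ₀ hπ _))) = _
  rw [hΦ]
  show Multiplicative.toAdd (σbar (mkRQ (π := π) ⟨rmap hπ (g 0) (g 1), _⟩)) = _
  rw [σbar_mkRQ]
  show tch π (rmap hπ (g 0) (g 1)) - βc 1 1 = _
  rw [tch_rmap, D1, map_add, map_sub, LL_single, LL_single, LL_single]
  have hβ : mkB (Finsupp.single ![g 0, g 1] 1) = βc (g 0) (g 1) := rfl
  rw [hβ]
  abel

include hπ in
lemma SΦ_cycle {z : barChains Q ℤ 2} (hz : barD Q ℤ 1 1 z = 0) :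
    Multiplicative.toAdd (σbar (π := π) (Additive.toMul (Φ₀ hπ z))) = - mkB z := by
  have h := DFunLike.congr_fun (SΦ_eq hπ) z
  rw [AddMonoidHom.sub_apply, AddMonoidHom.comp_apply, hz, map_zero, zero_sub] at h
  exact h

/-- abelianization comparison: `μ : R/[F,R] →* F_ab`. -/
noncomputable def μab : RQ (π := π) →* Abelianization (FreeGroup α) :=
  QuotientGroup.lift _ (Abelianization.of.comp π.ker.subtype) (by
    intro r hr
    rw [Subgroup.mem_subgroupOf] at hr
    have hr' : r.1 ∈ commutator (FreeGroup α) :=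
      Subgroup.commutator_mono le_rfl le_top hr
    show Abelianization.of r.1 = 1
    exact (QuotientGroup.eq_one_iff _).mpr hr')

lemma μab_mkRQ (r : ↥π.ker) : μab (mkRQ (π := π) r) = Abelianization.of r.1 := rfl

/-- `C₁ →+ F_ab`, `[q] ↦ s q`. -/
noncomputable def LA : barChains Q ℤ 1 →+ Additive (Abelianization (FreeGroup α)) :=
  Finsupp.liftAddHom fun g => zmultiplesHom _ (Additive.ofMul (Abelianization.of (sget hπ (g 0))))

lemma LA_single (q : Q) :
    LA hπ (Finsupp.single ![q] 1) = Additive.ofMul (Abelianization.of (sget hπ q)) := by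
  rw [LA, Finsupp.liftAddHom_apply_single, zmultiplesHom_apply, one_zsmul]
  norm_num

/-- `μ ∘ Φ₀` additive. -/
noncomputable def MA : barChains Q ℤ 2 →+ Additive (Abelianization (FreeGroup α)) :=
  AddMonoidHom.mk' (fun z => Additive.ofMul (μab (π := π) (Additive.toMul (Φ₀ hπ z))))
    (by
      intro a b
      show Additive.ofMul (μab (π := π) (Additive.toMul (Φ₀ hπ (a + b)))) = _
      rw [map_add]
      show Additive.ofMul (μab (Additive.toMul (Φ₀ hπ a) * Additive.toMul (Φ₀ hπ b))) = _
      rw [map_mul]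
      rfl)

include hπ in
lemma MA_eq : MA hπ = (LA hπ).comp (barD Q ℤ 1 1) := by
  apply Finsupp.addHom_ext'
  intro g
  apply AddMonoidHom.ext_int
  simp only [AddMonoidHom.comp_apply, Finsupp.singleAddHom_apply]
  rw [eta2 g]
  have hΦ : Additive.toMul (Φ₀ hπ (Finsupp.single ![g 0, g 1] 1)) = rr hπ (g 0) (g 1) := by
    rw [Φ₀_single]
    rfl
  show Additive.ofMul (μab (π := π) (Additive.toMul (Φ₀ hπ _))) = _
  rw [hΦ]
  show Additive.ofMul (μab (mkRQ (π := π) ⟨rmap hπ (g 0) (g 1), _⟩)) = _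
  rw [μab_mkRQ]
  show Additive.ofMul (Abelianization.of (rmap hπ (g 0) (g 1))) = _
  rw [D1, map_add, map_sub, LA_single, LA_single, LA_single]
  unfold rmap
  simp only [map_mul, map_inv, ofMul_mul, ofMul_inv]
  abel

include hπ in
lemma MA_cycle {z : barChains Q ℤ 2} (hz : barD Q ℤ 1 1 z = 0) :
    μab (π := π) (Additive.toMul (Φ₀ hπ z)) = 1 := by
  have h := DFunLike.congr_fun (MA_eq hπ) z
  rw [AddMonoidHom.comp_apply, hz, map_zero] at h
  have := congrArg Additive.toMul h
  exact this

include hπ in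
lemma Ψq_injective : Function.Injective (Ψq (π := π)) := by
  rw [injective_iff_map_eq_one]
  intro x hx
  obtain ⟨k, rfl⟩ := QuotientGroup.mk'_surjective _ x
  have hσ : σK π k = 1 := hx
  have hval : tch π k.1 - βc 1 1 = 0 := by
    have := congrArg (fun u => (Multiplicative.toAdd u).1) hσ
    simpa [σK] using this
  have ht : tch π k.1 = βc 1 1 := by
    have := sub_eq_zero.mp hval
    exact this
  have hmem : k.1 ∈ ⁅(⊤ : Subgroup (FreeGroup α)), π.ker⁆ :=
    inj_core hπ k.2.1 k.2.2 ht
  show QuotientGroup.mk k = 1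
  rw [QuotientGroup.eq_one_iff]
  rw [Subgroup.mem_subgroupOf]
  exact hmem

include hπ in
lemma Ψq_surjective : Function.Surjective (Ψq (π := π)) := by
  intro y
  obtain ⟨z, hz⟩ := QuotientAddGroup.mk'_surjective (barBoundaries Q ℤ 1 2)
    (Multiplicative.toAdd y).1
  have hzc : barD Q ℤ 1 1 z = 0 := by
    have hker := (Multiplicative.toAdd y).2
    rw [AddMonoidHom.mem_ker] at hker
    have : Dbar (mkB z) = 0 := by rw [show mkB z = (Multiplicative.toAdd y).1 from hz]; exact hker
    rw [Dbar_mkB] at this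
    exact this
  obtain ⟨w, hw⟩ := QuotientGroup.mk'_surjective _ (Additive.toMul (Φ₀ hπ z))
  have hwcomm : w.1 ∈ commutator (FreeGroup α) := by
    have h1 : μab (π := π) (Additive.toMul (Φ₀ hπ z)) = 1 := MA_cycle hπ hzc
    rw [← hw] at h1
    have h2 : Abelianization.of w.1 = 1 := h1
    exact (QuotientGroup.eq_one_iff _).mp h2
  have hσ : tch π w.1 - βc 1 1 = - mkB z := by
    have h1 := SΦ_cycle hπ hzc
    rw [← hw] at h1
    have h2 : Multiplicative.toAdd (σbar (mkRQ (π := π) w)) = - mkB z := h1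
    rw [σbar_mkRQ] at h2
    exact h2
  refine ⟨(QuotientGroup.mk (⟨w.1, ⟨w.2, hwcomm⟩⟩ : ↥(Ksub π)))⁻¹, ?_⟩
  rw [map_inv]
  have h3 : Ψq (π := π) (QuotientGroup.mk (⟨w.1, ⟨w.2, hwcomm⟩⟩ : ↥(Ksub π)))
      = σK π ⟨w.1, ⟨w.2, hwcomm⟩⟩ := rfl
  rw [h3]
  have h4 : σK π ⟨w.1, ⟨w.2, hwcomm⟩⟩ = y⁻¹ := by
    exact congrArg Multiplicative.ofAdd (Subtype.ext (by
      show tch π w.1 - βc 1 1 = _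
      rw [hσ]
      exact congrArg Neg.neg hz))
  rw [h4, inv_inv]

end Sec
end HopfAux


/-- **Hopf's formula.** For any surjective homomorphism `π : F → Q` from a free group `F`
with kernel `R`, there is an isomorphism `H₂(Q; ℤ) ≅ (R ⊓ [F,F]) / [F, R]`, where `ℤ`
carries the trivial `Q`-action. -/
theorem hopf_formula {α : Type*} (Q : Type*) [Group Q] (π : FreeGroup α →* Q)
    (hπ : Function.Surjective π) :
    Nonempty
      (groupHomology' Q ℤ 1 2 ≃+
        Additive ((↥(π.ker ⊓ commutator (FreeGroup α))) ⧸
          ((⁅(⊤ : Subgroup (FreeGroup α)), π.ker⁆).subgroupOf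
            (π.ker ⊓ commutator (FreeGroup α))))) := by
  classical
  let e := MulEquiv.ofBijective (HopfAux.Ψq (π := π))
    ⟨HopfAux.Ψq_injective hπ, HopfAux.Ψq_surjective hπ⟩
  refine ⟨(HopfAux.eH (Q := Q)).trans
    { toFun := fun x => Additive.ofMul (e.symm (Multiplicative.ofAdd x))
      invFun := fun x => Multiplicative.toAdd (e (Additive.toMul x))
      left_inv := fun x => by simp
      right_inv := fun x => by simp
      map_add' := fun x y => by
        show Additive.ofMul (e.symm (Multiplicative.ofAdd (x + y))) = _
        rw [show Multiplicative.ofAdd (x + y)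
            = Multiplicative.ofAdd x * Multiplicative.ofAdd y from rfl, map_mul]
        rfl }⟩
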